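/- arXiv:2506.18093 — 5 statements merged into one kernel-verified Lean document; each statement's English description precedes it below -/
import Mathlib

section
/- Let μ be a finite nonnegative Borel measure on ℝ with limsup_{|ξ|→∞} |μ̂(ξ)| < μ(ℝ). Then for any u ∈ L²(ℝ, μ, ℂ) with |u(x)| = 1 μ-a.e., there exist δ > 0 and T > 0 such that ‖Φ_t u − u‖ > δ for all t with |t| > T, where (Φ_t u)(x) = e^{itx} u(x). -/
open MeasureTheory Filter ENNReal

lemma norm_exp_sub_one (θ : ℝ) : ‖Complex.exp (↑θ * Complex.I) - 1‖^2 = 2 - 2*Real.cos θ := by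
  rw [Complex.sq_norm, Complex.normSq_apply]
  simp [Complex.exp_ofReal_mul_I_re, Complex.exp_ofReal_mul_I_im]
  nlinarith [Real.sin_sq_add_cos_sq θ]

lemma integ_cos (μ : Measure ℝ) [IsFiniteMeasure μ] (t : ℝ) :
    Integrable (fun x : ℝ => Real.cos (t*x)) μ := by
  apply Integrable.mono' (integrable_const 1)
  · exact (Real.continuous_cos.comp (by continuity)).aestronglyMeasurable
  · filter_upwards with x; simpa using Real.abs_cos_le_one (t*x)

lemma integ_exp (μ : Measure ℝ) [IsFiniteMeasure μ] (t : ℝ) :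
    Integrable (fun x : ℝ => Complex.exp (-(t*x) * Complex.I)) μ := by
  apply Integrable.mono' (integrable_const 1)
  · exact (Complex.continuous_exp.comp (by continuity)).aestronglyMeasurable
  · filter_upwards with x
    rw [show -(↑t*↑x) * Complex.I = (↑(-(t*x)):ℂ) * Complex.I by push_cast; ring,
      Complex.norm_exp_ofReal_mul_I]

lemma cos_le (μ : Measure ℝ) [IsFiniteMeasure μ] (t : ℝ) :
    ∫ x, Real.cos (t*x) ∂μ ≤ ‖∫ x, Complex.exp (-(t*x) * Complex.I) ∂μ‖ := by
  have h1 : ∫ x, Real.cos (t*x) ∂μ = (∫ x, Complex.exp (-(t*x) * Complex.I) ∂μ).re := by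
    rw [show ((∫ x, Complex.exp (-(t*x) * Complex.I) ∂μ).re)
        = ∫ x, (Complex.exp (-(t*x) * Complex.I)).re ∂μ from integral_re (integ_exp μ t) ▸ rfl]
    congr 1; ext x
    rw [show -(↑t*↑x) * Complex.I = (↑(-(t*x)):ℂ) * Complex.I by push_cast; ring,
      Complex.exp_ofReal_mul_I_re, Real.cos_neg]
  rw [h1]
  exact Complex.re_le_norm _

lemma fourier_bdd (μ : Measure ℝ) [IsFiniteMeasure μ] (t : ℝ) :
    ‖∫ x, Complex.exp (-(t*x) * Complex.I) ∂μ‖ ≤ (μ Set.univ).toReal := by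
  calc ‖∫ x, Complex.exp (-(t*x) * Complex.I) ∂μ‖
      ≤ ∫ x, ‖Complex.exp (-(t*x) * Complex.I)‖ ∂μ := norm_integral_le_integral_norm _
    _ = ∫ x, (1:ℝ) ∂μ := by
        congr 1; ext x
        rw [show -(↑t*↑x) * Complex.I = (↑(-(t*x)):ℂ) * Complex.I by push_cast; ring,
          Complex.norm_exp_ofReal_mul_I]
    _ = (μ Set.univ).toReal := by simp [Measure.real]

/-- If `limsup_{|ξ|→∞} |μ̂(ξ)| < μ(ℝ)`, then for any `u ∈ L²(ℝ, μ, ℂ)` with `|u| = 1` μ-a.e.,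
there exist `δ > 0` and `T > 0` such that `‖Φ_t u − u‖ > δ` for all `|t| > T`,
where `(Φ_t u)(x) = e^{itx} u(x)`. -/
theorem stmt_1 (μ : Measure ℝ) [IsFiniteMeasure μ]
    (hlim : Filter.limsup
        (fun ξ : ℝ => ‖∫ x, Complex.exp (-(ξ * x) * Complex.I) ∂μ‖)
        (Filter.cocompact ℝ) < (μ Set.univ).toReal)
    (u : ℝ → ℂ) (hu : MemLp u 2 μ) (hu1 : ∀ᵐ x ∂μ, ‖u x‖ = 1) :
    ∃ δ > (0 : ℝ), ∃ T > (0 : ℝ), ∀ t : ℝ, T < |t| →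
      ENNReal.ofReal δ <
        eLpNorm (fun x : ℝ => Complex.exp ((↑(t * x)) * Complex.I) * u x - u x) 2 μ := by
  set m : ℝ := (μ Set.univ).toReal with hm
  set L : ℝ := (Filter.limsup
        (fun ξ : ℝ => ‖∫ x, Complex.exp (-(ξ * x) * Complex.I) ∂μ‖)
        (Filter.cocompact ℝ) + m)/2 with hL
  have hLm : L < m := by rw [hL]; linarith
  have hlimL : Filter.limsup
        (fun ξ : ℝ => ‖∫ x, Complex.exp (-(ξ * x) * Complex.I) ∂μ‖)
        (Filter.cocompact ℝ) < L := by rw [hL]; linarith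
  set c : ℝ := 2*(m - L) with hc
  have hc0 : 0 < c := by rw [hc]; linarith
  -- eventually bound
  have hbdd : Filter.IsBoundedUnder (· ≤ ·) (Filter.cocompact ℝ)
      (fun ξ : ℝ => ‖∫ x, Complex.exp (-(ξ * x) * Complex.I) ∂μ‖) :=
    Filter.isBoundedUnder_of ⟨m, fun ξ => fourier_bdd μ ξ⟩
  have hev : ∀ᶠ ξ : ℝ in Filter.cocompact ℝ,
      ‖∫ x, Complex.exp (-(ξ * x) * Complex.I) ∂μ‖ < L :=
    Filter.eventually_lt_of_limsup_lt hlimL hbdd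
  rw [cocompact_eq_atBot_atTop, Filter.eventually_sup, Filter.eventually_atBot,
    Filter.eventually_atTop] at hev
  obtain ⟨⟨a, ha⟩, b, hb⟩ := hev
  refine ⟨Real.sqrt c / 2, by positivity, max |a| |b| + 1, by positivity, fun t ht => ?_⟩
  have hfL : ‖∫ x, Complex.exp (-(t * x) * Complex.I) ∂μ‖ < L := by
    rcases lt_abs.mp ht with h | h
    · exact hb t (by have := le_max_right |a| |b|; have := le_abs_self b; linarith)
    · exact ha t (by have := le_max_left |a| |b|; have := neg_abs_le a; linarith)
  have hcosL : ∫ x, Real.cos (t*x) ∂μ < L := lt_of_le_of_lt (cos_le μ t) hfL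
  -- the integral of 2 - 2cos
  have hint : Integrable (fun x : ℝ => 2 - 2 * Real.cos (t*x)) μ :=
    (integrable_const 2).sub ((integ_cos μ t).const_mul 2)
  have hIeq : ∫ x, (2 - 2 * Real.cos (t*x)) ∂μ = 2*m - 2*∫ x, Real.cos (t*x) ∂μ := by
    rw [integral_sub (integrable_const 2) ((integ_cos μ t).const_mul 2),
      integral_const, integral_const_mul]
    simp [hm, smul_eq_mul, mul_comm, Measure.real]
  have hIc : c < ∫ x, (2 - 2 * Real.cos (t*x)) ∂μ := by rw [hIeq, hc]; linarith
  set I : ℝ := ∫ x, (2 - 2 * Real.cos (t*x)) ∂μ with hI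
  have hI0 : 0 ≤ I := le_of_lt (lt_trans hc0 hIc)
  -- lower bound for lintegral
  have hnonneg : 0 ≤ᵐ[μ] fun x : ℝ => 2 - 2 * Real.cos (t*x) := by
    filter_upwards with x; simp only [Pi.zero_apply]; have := Real.cos_le_one (t*x); linarith
  have hlin : ENNReal.ofReal I
      ≤ ∫⁻ x, (‖Complex.exp ((↑(t * x)) * Complex.I) * u x - u x‖₊ : ℝ≥0∞) ^ (2:ℝ) ∂μ := by
    rw [hI, MeasureTheory.ofReal_integral_eq_lintegral_ofReal hint hnonneg]
    apply lintegral_mono_ae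
    filter_upwards [hu1] with x hx
    have hfx : ‖Complex.exp ((↑(t * x)) * Complex.I) * u x - u x‖ ^ 2 = 2 - 2*Real.cos (t*x) := by
      have : Complex.exp ((↑(t * x)) * Complex.I) * u x - u x
          = (Complex.exp ((↑(t * x)) * Complex.I) - 1) * u x := by ring
      rw [this, norm_mul, hx, mul_one, norm_exp_sub_one]
    have h2 : ((‖Complex.exp ((↑(t * x)) * Complex.I) * u x - u x‖₊ : ℝ≥0∞)) ^ (2:ℝ)
        = ENNReal.ofReal (‖Complex.exp ((↑(t * x)) * Complex.I) * u x - u x‖^2) := by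
      rw [show ((2:ℝ)) = ((2:ℕ):ℝ) by norm_num, ENNReal.rpow_natCast,
        ← enorm_eq_nnnorm, ← ofReal_norm, ← ENNReal.ofReal_pow (norm_nonneg _)]
    rw [h2, hfx]
  -- eLpNorm
  have heLp : eLpNorm (fun x : ℝ => Complex.exp ((↑(t * x)) * Complex.I) * u x - u x) 2 μ
      = (∫⁻ x, (‖Complex.exp ((↑(t * x)) * Complex.I) * u x - u x‖₊ : ℝ≥0∞) ^ (2:ℝ) ∂μ)
        ^ (1/(2:ℝ)) := by
    rw [eLpNorm_eq_lintegral_rpow_enorm_toReal (by norm_num) (by norm_num)]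
    simp only [enorm_eq_nnnorm]
    norm_num
  rw [heLp]
  calc ENNReal.ofReal (Real.sqrt c / 2) < ENNReal.ofReal (Real.sqrt I) := by
        have h1 : Real.sqrt c / 2 < Real.sqrt c := by
          have := Real.sqrt_pos.mpr hc0; linarith
        exact (ENNReal.ofReal_lt_ofReal_iff (Real.sqrt_pos.mpr (lt_trans hc0 hIc))).mpr
          (lt_of_lt_of_le h1 (Real.sqrt_le_sqrt hIc.le))
    _ = (ENNReal.ofReal I) ^ (1/(2:ℝ)) := by
        rw [Real.sqrt_eq_rpow, ENNReal.ofReal_rpow_of_nonneg hI0 (by norm_num)]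
    _ ≤ _ := ENNReal.rpow_le_rpow hlin (by norm_num)
end

section
/- Let μ be a finite nonnegative Borel measure on ℝ with limsup_{|ξ|→∞} |μ̂(ξ)| < μ(ℝ), and let u ∈ L²(ℝ, μ, ℂ) satisfy |u| = 1 μ-a.e. Then u is a wandering point for the flow (Φ_t u)(x) = e^{itx}u(x): there exist a > 0 and T > 0 such that the open ball B(u, a) satisfies Φ_t(B(u, a)) ∩ B(u, a) = ∅ for all |t| > T. -/
open MeasureTheory Filter
open scoped ENNReal NNReal

lemma aux_norm_sq (r : ℝ) : ‖Complex.exp ((r:ℂ) * Complex.I) - 1‖^2 = 2 - 2 * Real.cos r := by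
  rw [Complex.sq_norm]
  simp [Complex.normSq_apply, Complex.sub_re, Complex.sub_im,
    Complex.exp_ofReal_mul_I_re, Complex.exp_ofReal_mul_I_im]
  nlinarith [Real.sin_sq_add_cos_sq r]

lemma aux_integrable (μ : Measure ℝ) [IsFiniteMeasure μ] (t : ℝ) :
    Integrable (fun x => 2 - 2 * Real.cos (t*x)) μ := by
  refine (integrable_const (4:ℝ)).mono'
    (Continuous.aestronglyMeasurable (by fun_prop)) ?_
  filter_upwards with x
  have h1 := Real.neg_one_le_cos (t*x)
  have h2 := Real.cos_le_one (t*x)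
  rw [Real.norm_eq_abs, abs_le]; constructor <;> nlinarith

lemma aux_lint (μ : Measure ℝ) [IsFiniteMeasure μ] (t : ℝ) :
    ∫⁻ x, (‖Complex.exp (((t*x : ℝ) : ℂ) * Complex.I) - 1‖₊ : ℝ≥0∞) ^ (2:ℝ) ∂μ
      = ENNReal.ofReal (∫ x, (2 - 2 * Real.cos (t*x)) ∂μ) := by
  have h1 : ∀ x : ℝ, ((‖Complex.exp (((t*x : ℝ) : ℂ) * Complex.I) - 1‖₊ : ℝ≥0∞) ^ (2:ℝ))
      = ENNReal.ofReal (2 - 2 * Real.cos (t*x)) := by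
    intro x
    rw [← enorm_eq_nnnorm, ← ofReal_norm_eq_enorm,
      ENNReal.ofReal_rpow_of_nonneg (norm_nonneg _) (by norm_num : (0:ℝ) ≤ 2)]
    congr 1
    rw [show ((2:ℝ)) = ((2:ℕ):ℝ) by norm_num, Real.rpow_natCast]
    exact aux_norm_sq (t*x)
  simp_rw [h1]
  rw [← ofReal_integral_eq_lintegral_ofReal (aux_integrable μ t)]
  filter_upwards with x
  simp only [Pi.zero_apply]
  nlinarith [Real.cos_le_one (t*x)]

/-- If `limsup_{|ξ|→∞} |μ̂(ξ)| < μ(ℝ)` and `|u| = 1` μ-a.e., then `u` is a wandering point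
for the flow `(Φ_t u)(x) = e^{itx}u(x)`: there exist `a > 0` and `T > 0` such that the
`L²`-ball `B(u, a)` satisfies `Φ_t(B(u,a)) ∩ B(u,a) = ∅` for all `|t| > T`. -/
theorem stmt_2 (μ : Measure ℝ) [IsFiniteMeasure μ]
    (hlim : Filter.limsup
        (fun ξ : ℝ => ‖∫ x, Complex.exp (-(ξ * x) * Complex.I) ∂μ‖)
        (Filter.cocompact ℝ) < (μ Set.univ).toReal)
    (u : ℝ → ℂ) (hu : MemLp u 2 μ) (hu1 : ∀ᵐ x ∂μ, ‖u x‖ = 1) :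
    ∃ a > (0 : ℝ), ∃ T > (0 : ℝ), ∀ t : ℝ, T < |t| →
      ∀ v : ℝ → ℂ, MemLp v 2 μ →
        eLpNorm (fun x : ℝ => v x - u x) 2 μ < ENNReal.ofReal a →
        eLpNorm (fun x : ℝ => Complex.exp ((↑(t * x)) * Complex.I) * v x - u x) 2 μ
            < ENNReal.ofReal a → False := by
  set M := (μ Set.univ).toReal with hM
  set F : ℝ → ℝ := fun ξ => ‖∫ x, Complex.exp (-(ξ * x) * Complex.I) ∂μ‖ with hF
  -- boundedness of F by M
  have hFbdd : ∀ ξ, F ξ ≤ M := by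
    intro ξ
    calc F ξ ≤ ∫ x, ‖Complex.exp (-(ξ * x) * Complex.I)‖ ∂μ := norm_integral_le_integral_norm _
      _ = ∫ _x, (1:ℝ) ∂μ := by
          apply integral_congr_ae; filter_upwards with x
          rw [Complex.norm_exp]; simp
      _ = M := by simp [hM, measureReal_def]
  have hbdd : IsBoundedUnder (· ≤ ·) (cocompact ℝ) F :=
    ⟨M, Filter.eventually_map.2 (Filter.Eventually.of_forall hFbdd)⟩
  have hL0 : 0 ≤ limsup F (cocompact ℝ) :=
    le_limsup_of_frequently_le (Frequently.of_forall fun ξ => norm_nonneg _) hbdd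
  obtain ⟨c, hc1, hc2⟩ := exists_between hlim
  have hc0 : 0 ≤ c := le_of_lt (lt_of_le_of_lt hL0 hc1)
  have hMc : 0 < M - c := by linarith
  have hev : ∀ᶠ ξ in cocompact ℝ, F ξ < c := eventually_lt_of_limsup_lt hc1 hbdd
  obtain ⟨K, hK, hKc⟩ := (hasBasis_cocompact.eventually_iff).1 hev
  obtain ⟨R, hR⟩ := hK.isBounded.subset_closedBall 0
  -- choose constants
  set r : ℝ := Real.sqrt (2 * (M - c)) with hr
  have hrpos : 0 < r := Real.sqrt_pos.2 (by linarith)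
  have hrsq : r ^ 2 = 2 * (M - c) := Real.sq_sqrt (by linarith)
  refine ⟨r / 2, by linarith, max R 1, lt_max_of_lt_right one_pos, ?_⟩
  intro t ht v hv hv1 hv2
  have htK : t ∉ K := by
    intro hmem
    have h := hR hmem
    rw [Metric.mem_closedBall, Real.dist_eq, sub_zero] at h
    have h2 : R < |t| := lt_of_le_of_lt (le_max_left R 1) ht
    linarith
  have hFt : F t < c := hKc htK
  -- integrability facts
  have hexp_int : Integrable (fun x : ℝ => Complex.exp (-(↑t * ↑x) * Complex.I)) μ := by
    refine (integrable_const (1:ℝ)).mono'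
      (Continuous.aestronglyMeasurable (by fun_prop)) ?_
    filter_upwards with x
    rw [Complex.norm_exp]; simp
  have hcos_int : Integrable (fun x : ℝ => Real.cos (t*x)) μ := by
    refine (integrable_const (1:ℝ)).mono'
      (Continuous.aestronglyMeasurable (by fun_prop)) ?_
    filter_upwards with x
    rw [Real.norm_eq_abs]; exact Real.abs_cos_le_one _
  -- the cosine integral equals the real part of the Fourier transform
  have hre : ∫ x, Real.cos (t*x) ∂μ = (∫ x, Complex.exp (-(↑t * ↑x) * Complex.I) ∂μ).re := by
    have h0 := integral_re (𝕜 := ℂ) hexp_int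
    rw [← RCLike.re_to_complex, ← h0]
    apply integral_congr_ae; filter_upwards with x
    have h1 : (-(↑t * ↑x) : ℂ) = ((-(t*x) : ℝ) : ℂ) := by push_cast; ring
    rw [RCLike.re_to_complex, h1, Complex.exp_ofReal_mul_I_re, Real.cos_neg]
  -- lower bound for the integral
  have hint_lb : r ^ 2 ≤ ∫ x, (2 - 2 * Real.cos (t*x)) ∂μ := by
    have h1 : ∫ x, (2 - 2 * Real.cos (t*x)) ∂μ = 2 * M - 2 * ∫ x, Real.cos (t*x) ∂μ := by
      rw [integral_sub (integrable_const 2) (hcos_int.const_mul 2), integral_const_mul,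
        integral_const, smul_eq_mul, hM, measureReal_def]; ring
    have h2 : (∫ x, Complex.exp (-(↑t * ↑x) * Complex.I) ∂μ).re ≤ F t := by
      have h3 := Complex.re_le_norm (∫ x, Complex.exp (-(↑t * ↑x) * Complex.I) ∂μ)
      exact h3
    rw [h1, hrsq, hre]
    linarith
  -- key lower bound on the eLpNorm of the flow difference applied to u
  have hmeas_e : AEStronglyMeasurable (fun x : ℝ => Complex.exp (((t*x : ℝ) : ℂ) * Complex.I)) μ :=
    Continuous.aestronglyMeasurable (by fun_prop)
  have hkey : ENNReal.ofReal r ≤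
      eLpNorm (fun x : ℝ => Complex.exp (((t*x : ℝ) : ℂ) * Complex.I) * u x - u x) 2 μ := by
    have hcongr : eLpNorm (fun x : ℝ => Complex.exp (((t*x : ℝ) : ℂ) * Complex.I) * u x - u x) 2 μ
        = eLpNorm (fun x : ℝ => Complex.exp (((t*x : ℝ) : ℂ) * Complex.I) - 1) 2 μ := by
      apply eLpNorm_congr_norm_ae
      filter_upwards [hu1] with x hx
      have : Complex.exp (((t*x : ℝ) : ℂ) * Complex.I) * u x - u x
          = (Complex.exp (((t*x : ℝ) : ℂ) * Complex.I) - 1) * u x := by ring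
      rw [this, norm_mul, hx, mul_one]
    rw [hcongr, eLpNorm_eq_lintegral_rpow_enorm_toReal (by norm_num) (by norm_num)]
    have h2 : ((2:ℝ≥0∞).toReal) = (2:ℝ) := by norm_num
    rw [h2]; simp only [enorm_eq_nnnorm]; rw [aux_lint μ t]
    calc ENNReal.ofReal r = (ENNReal.ofReal (r ^ 2)) ^ (1/2 : ℝ) := by
          rw [ENNReal.ofReal_rpow_of_nonneg (sq_nonneg r) (by norm_num)]
          congr 1
          rw [← Real.rpow_natCast r 2, ← Real.rpow_mul hrpos.le]
          norm_num
      _ ≤ (ENNReal.ofReal (∫ x, (2 - 2 * Real.cos (t*x)) ∂μ)) ^ (1/2 : ℝ) := by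
          exact ENNReal.rpow_le_rpow (ENNReal.ofReal_le_ofReal hint_lb) (by norm_num)
  -- triangle inequality
  have htri : eLpNorm (fun x : ℝ => Complex.exp (((t*x : ℝ) : ℂ) * Complex.I) * u x - u x) 2 μ
      ≤ eLpNorm (fun x : ℝ => v x - u x) 2 μ
        + eLpNorm (fun x : ℝ => Complex.exp (((t*x : ℝ) : ℂ) * Complex.I) * v x - u x) 2 μ := by
    have heq : (fun x : ℝ => Complex.exp (((t*x : ℝ) : ℂ) * Complex.I) * u x - u x)
        = (fun x : ℝ => (Complex.exp (((t*x : ℝ) : ℂ) * Complex.I) * u x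
            - Complex.exp (((t*x : ℝ) : ℂ) * Complex.I) * v x)
          + (Complex.exp (((t*x : ℝ) : ℂ) * Complex.I) * v x - u x)) := by
      funext x; ring
    have hsub : eLpNorm (fun x : ℝ => Complex.exp (((t*x : ℝ) : ℂ) * Complex.I) * u x
        - Complex.exp (((t*x : ℝ) : ℂ) * Complex.I) * v x) 2 μ
        = eLpNorm (fun x : ℝ => v x - u x) 2 μ := by
      apply eLpNorm_congr_norm_ae
      filter_upwards with x
      have h1 : Complex.exp (((t*x : ℝ) : ℂ) * Complex.I) * u x
          - Complex.exp (((t*x : ℝ) : ℂ) * Complex.I) * v x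
          = Complex.exp (((t*x : ℝ) : ℂ) * Complex.I) * (u x - v x) := by ring
      rw [h1, norm_mul, Complex.norm_exp]
      simp [norm_sub_rev (u x) (v x)]
    rw [heq, ← hsub]
    exact eLpNorm_add_le ((hmeas_e.mul hu.1).sub (hmeas_e.mul hv.1))
      ((hmeas_e.mul hv.1).sub hu.1) one_le_two
  have hfinal : ENNReal.ofReal r < ENNReal.ofReal r := by
    calc ENNReal.ofReal r
        ≤ eLpNorm (fun x : ℝ => Complex.exp (((t*x : ℝ) : ℂ) * Complex.I) * u x - u x) 2 μ := hkey
      _ ≤ _ := htri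
      _ < ENNReal.ofReal (r/2) + ENNReal.ofReal (r/2) := ENNReal.add_lt_add hv1 hv2
      _ = ENNReal.ofReal r := by
          rw [← ENNReal.ofReal_add (by linarith) (by linarith)]; norm_num
  exact absurd hfinal (lt_irrefl _)
end

section
/- Let μ be a finite nonnegative Borel measure on ℝ. Suppose there exists σ ∈ (0,1) such that for every Borel set A ⊆ ℝ, limsup_{|ξ|→∞} |(μ|_A)^(ξ)| ≤ (1−σ)·μ(A), where μ|_A is the restriction of μ to A. Then every nonzero v ∈ L²(ℝ, μ, ℂ) is a wandering point of the flow (Φ_t v)(x) = e^{itx} v(x): there exist a neighborhood O(v) and T > 0 with Φ_t(O(v)) ∩ O(v) = ∅ for all |t| > T. -/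
open MeasureTheory Filter

private lemma expBound (ξ x : ℝ) : ‖Complex.exp (-((ξ:ℂ) * (x:ℂ)) * Complex.I)‖ = 1 := by
  have h : (-((ξ:ℂ) * (x:ℂ)) * Complex.I) = ((-(ξ * x) : ℝ) : ℂ) * Complex.I := by
    push_cast; ring
  rw [h, Complex.norm_exp_ofReal_mul_I]

private lemma hexp_aesm (μ : Measure ℝ) (ξ : ℝ) :
    AEStronglyMeasurable (fun x : ℝ => Complex.exp (-((ξ:ℂ) * (x:ℂ)) * Complex.I)) μ :=
  Continuous.aestronglyMeasurable (by fun_prop)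

private lemma simple_step (μ : Measure ℝ) [IsFiniteMeasure μ] (σ : ℝ) (hσ : σ ∈ Set.Ioo (0:ℝ) 1)
    (h : ∀ A : Set ℝ, MeasurableSet A →
      Filter.limsup (fun ξ : ℝ => ‖∫ x in A, Complex.exp (-(ξ * x) * Complex.I) ∂μ‖)
        (Filter.cocompact ℝ) ≤ (1 - σ) * (μ A).toReal) :
    ∀ s : SimpleFunc ℝ ℝ, (∀ x, 0 ≤ s x) → ∀ ε : ℝ, 0 < ε →
      ∀ᶠ ξ : ℝ in Filter.cocompact ℝ,
        ‖∫ x, Complex.exp (-((ξ:ℂ) * (x:ℂ)) * Complex.I) * (s x : ℂ) ∂μ‖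
          ≤ (1 - σ) * (∫ x, s x ∂μ) + ε := by
  intro s
  induction s using MeasureTheory.SimpleFunc.induction with
  | const c hA =>
    rename_i A
    intro hpos ε hε
    by_cases hc : c ≤ 0
    · have hz : ∀ x, (SimpleFunc.piecewise A hA (SimpleFunc.const ℝ c) (SimpleFunc.const ℝ 0)) x = 0 := by
        intro x
        have := hpos x
        by_cases hx : x ∈ A <;>
          simp [SimpleFunc.piecewise_apply, hx] at this ⊢ <;> linarith
      have hz' : (fun x => ((SimpleFunc.piecewise A hA (SimpleFunc.const ℝ c) (SimpleFunc.const ℝ 0)) x : ℝ)) = fun _ => (0:ℝ) := funext hz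
      have hint0 : (∫ x, ((SimpleFunc.piecewise A hA (SimpleFunc.const ℝ c) (SimpleFunc.const ℝ 0)) x : ℝ) ∂μ) = 0 := by
        rw [hz']; simp
      refine Filter.Eventually.of_forall fun ξ => ?_
      have hfun0 : (fun x : ℝ => Complex.exp (-((ξ:ℂ) * (x:ℂ)) * Complex.I) * ((SimpleFunc.piecewise A hA (SimpleFunc.const ℝ c) (SimpleFunc.const ℝ 0)) x : ℂ)) = fun _ => (0 : ℂ) := by
        funext x; rw [hz x]; simp
      rw [hfun0, hint0]
      simpa using hε.le
    · push_neg at hc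
      set u : ℝ → ℝ := fun ξ => ‖∫ x in A, Complex.exp (-(ξ * x) * Complex.I) ∂μ‖ with hu
      have hub : ∀ ξ : ℝ, u ξ ≤ (μ A).toReal := by
        intro ξ
        calc u ξ ≤ ∫ x in A, ‖Complex.exp (-((ξ:ℂ) * (x:ℂ)) * Complex.I)‖ ∂μ :=
              norm_integral_le_integral_norm _
          _ = (μ A).toReal := by simp only [expBound]; simp [measureReal_def]
      have hbdd : IsBoundedUnder (· ≤ ·) (Filter.cocompact ℝ) u :=
        Filter.isBoundedUnder_of ⟨(μ A).toReal, hub⟩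
      have hev : ∀ᶠ ξ : ℝ in Filter.cocompact ℝ, u ξ < (1 - σ) * (μ A).toReal + ε / c :=
        Filter.eventually_lt_of_limsup_lt
          (lt_of_le_of_lt (h A hA) (lt_add_of_pos_right _ (div_pos hε hc))) hbdd
      filter_upwards [hev] with ξ hξ
      have hfun : (fun x : ℝ => Complex.exp (-((ξ:ℂ) * (x:ℂ)) * Complex.I) * ((SimpleFunc.piecewise A hA (SimpleFunc.const ℝ c) (SimpleFunc.const ℝ 0)) x : ℂ))
          = fun x => Set.indicator A (fun x : ℝ => (c : ℂ) * Complex.exp (-((ξ:ℂ) * (x:ℂ)) * Complex.I)) x := by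
        funext x
        by_cases hx : x ∈ A <;>
          simp [SimpleFunc.piecewise_apply, hx, mul_comm]
      have hints : (∫ x, ((SimpleFunc.piecewise A hA (SimpleFunc.const ℝ c) (SimpleFunc.const ℝ 0)) x : ℝ) ∂μ) = (μ A).toReal * c := by
        have h2 : (fun x => ((SimpleFunc.piecewise A hA (SimpleFunc.const ℝ c) (SimpleFunc.const ℝ 0)) x : ℝ)) = Set.indicator A (fun _ => c) := by
          funext x; by_cases hx : x ∈ A <;> simp [SimpleFunc.piecewise_apply, hx]
        rw [h2, integral_indicator_const c hA]; simp [mul_comm, measureReal_def]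
      rw [hfun, integral_indicator hA, MeasureTheory.integral_const_mul, hints]
      have hnorm : ‖(c : ℂ) * ∫ x in A, Complex.exp (-((ξ:ℂ) * (x:ℂ)) * Complex.I) ∂μ‖ = c * u ξ := by
        rw [norm_mul, Complex.norm_real, Real.norm_eq_abs, abs_of_pos hc]
      rw [hnorm]
      have h2 : c * u ξ ≤ c * ((1 - σ) * (μ A).toReal + ε / c) :=
        mul_le_mul_of_nonneg_left hξ.le hc.le
      have h3 : c * (ε / c) = ε := by field_simp
      nlinarith [h2, h3]
  | add hfg Pf Pg =>
    rename_i f g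
    intro hpos ε hε
    have hadd : ∀ x, (f + g) x = f x + g x := fun x => SimpleFunc.add_apply f g x
    have hf0 : ∀ x, 0 ≤ f x := by
      intro x
      rcases eq_or_ne (f x) 0 with h0 | h0
      · rw [h0]
      · have hg0 : g x = 0 := by
          by_contra hgx
          exact Set.disjoint_left.1 hfg h0 hgx
        have := hpos x
        rw [hadd x, hg0, add_zero] at this
        exact this
    have hg0 : ∀ x, 0 ≤ g x := by
      intro x
      rcases eq_or_ne (g x) 0 with h0 | h0
      · rw [h0]
      · have hf0' : f x = 0 := by
          by_contra hfx
          exact Set.disjoint_left.1 hfg hfx h0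
        have := hpos x
        rw [hadd x, hf0', zero_add] at this
        exact this
    filter_upwards [Pf hf0 (ε/2) (half_pos hε), Pg hg0 (ε/2) (half_pos hε)] with ξ h1 h2
    have hif : Integrable (fun x : ℝ => Complex.exp (-((ξ:ℂ) * (x:ℂ)) * Complex.I) * (f x : ℂ)) μ :=
      Integrable.bdd_mul ((f.integrable_of_isFiniteMeasure).ofReal) (hexp_aesm μ ξ)
        (ae_of_all _ fun x => (expBound ξ x).le)
    have hig : Integrable (fun x : ℝ => Complex.exp (-((ξ:ℂ) * (x:ℂ)) * Complex.I) * (g x : ℂ)) μ :=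
      Integrable.bdd_mul ((g.integrable_of_isFiniteMeasure).ofReal) (hexp_aesm μ ξ)
        (ae_of_all _ fun x => (expBound ξ x).le)
    have hsplit : (fun x : ℝ => Complex.exp (-((ξ:ℂ) * (x:ℂ)) * Complex.I) * ((f + g) x : ℂ))
        = fun x : ℝ => Complex.exp (-((ξ:ℂ) * (x:ℂ)) * Complex.I) * (f x : ℂ)
            + Complex.exp (-((ξ:ℂ) * (x:ℂ)) * Complex.I) * (g x : ℂ) := by
      funext x; rw [hadd x]; push_cast; ring
    have hintsum : (∫ x, ((f + g) x : ℝ) ∂μ) = (∫ x, f x ∂μ) + ∫ x, g x ∂μ := by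
      rw [show (fun x => ((f + g) x : ℝ)) = fun x => f x + g x from funext hadd]
      exact integral_add f.integrable_of_isFiniteMeasure g.integrable_of_isFiniteMeasure
    rw [hsplit, integral_add hif hig, hintsum]
    calc ‖(∫ x, Complex.exp (-((ξ:ℂ) * (x:ℂ)) * Complex.I) * (f x : ℂ) ∂μ) + ∫ x, Complex.exp (-((ξ:ℂ) * (x:ℂ)) * Complex.I) * (g x : ℂ) ∂μ‖
        ≤ ‖∫ x, Complex.exp (-((ξ:ℂ) * (x:ℂ)) * Complex.I) * (f x : ℂ) ∂μ‖ + ‖∫ x, Complex.exp (-((ξ:ℂ) * (x:ℂ)) * Complex.I) * (g x : ℂ) ∂μ‖ := norm_add_le _ _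
      _ ≤ ((1 - σ) * (∫ x, f x ∂μ) + ε/2) + ((1 - σ) * (∫ x, g x ∂μ) + ε/2) := add_le_add h1 h2
      _ = (1 - σ) * ((∫ x, f x ∂μ) + ∫ x, g x ∂μ) + ε := by ring

private lemma key_step (μ : Measure ℝ) [IsFiniteMeasure μ] (σ : ℝ) (hσ : σ ∈ Set.Ioo (0:ℝ) 1)
    (h : ∀ A : Set ℝ, MeasurableSet A →
      Filter.limsup (fun ξ : ℝ => ‖∫ x in A, Complex.exp (-(ξ * x) * Complex.I) ∂μ‖)
        (Filter.cocompact ℝ) ≤ (1 - σ) * (μ A).toReal)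
    (g : ℝ → ℝ) (hg : Integrable g μ) (hg0 : ∀ x, 0 ≤ g x) :
    ∀ ε : ℝ, 0 < ε → ∀ᶠ ξ : ℝ in Filter.cocompact ℝ,
      ‖∫ x, Complex.exp (-((ξ:ℂ) * (x:ℂ)) * Complex.I) * (g x : ℂ) ∂μ‖
        ≤ (1 - σ) * (∫ x, g x ∂μ) + ε := by
  intro ε hε
  have hε3 : 0 < ε / 3 := by linarith
  have hmem : MemLp g 1 μ := (memLp_one_iff_integrable).2 hg
  obtain ⟨s₀, hs₀, -⟩ := hmem.exists_simpleFunc_eLpNorm_sub_lt (by norm_num)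
    (ε := ENNReal.ofReal (ε/3)) (by simp [ENNReal.ofReal_eq_zero]; linarith)
  set s : SimpleFunc ℝ ℝ := s₀.map (fun y => max y 0) with hs_def
  have hs_app : ∀ x, s x = max (s₀ x) 0 := fun x => rfl
  have hsnn : ∀ x, 0 ≤ s x := fun x => by rw [hs_app]; exact le_max_right _ _
  have hdiff : ∀ x, ‖g x - s x‖ ≤ ‖(g - ⇑s₀) x‖ := by
    intro x
    rw [Pi.sub_apply, hs_app, Real.norm_eq_abs, Real.norm_eq_abs]
    rcases le_total (s₀ x) 0 with h' | h'
    · rw [max_eq_right h', sub_zero, abs_of_nonneg (hg0 x)]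
      have h1 : g x - s₀ x ≤ |g x - s₀ x| := le_abs_self _
      linarith
    · rw [max_eq_left h']
  have hle : eLpNorm (fun x => g x - s x) 1 μ ≤ eLpNorm (g - ⇑s₀) 1 μ :=
    eLpNorm_mono hdiff
  have hi : Integrable (fun x => g x - s x) μ := hg.sub s.integrable_of_isFiniteMeasure
  have hsl1 : (∫ x, ‖g x - s x‖ ∂μ) < ε / 3 := by
    have h1 : ENNReal.ofReal (∫ x, ‖g x - s x‖ ∂μ) = ∫⁻ x, ‖g x - s x‖ₑ ∂μ :=
      ofReal_integral_norm_eq_lintegral_enorm hi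
    have h2 : ENNReal.ofReal (∫ x, ‖g x - s x‖ ∂μ) < ENNReal.ofReal (ε/3) := by
      rw [h1]
      calc (∫⁻ x, ‖g x - s x‖ₑ ∂μ) = eLpNorm (fun x => g x - s x) 1 μ :=
            eLpNorm_one_eq_lintegral_enorm.symm
        _ ≤ eLpNorm (g - ⇑s₀) 1 μ := hle
        _ < ENNReal.ofReal (ε/3) := hs₀
    exact (ENNReal.ofReal_lt_ofReal_iff hε3).1 h2
  have hints : (∫ x, s x ∂μ) ≤ (∫ x, g x ∂μ) + ε / 3 := by
    have h1 : (∫ x, (s x - g x) ∂μ) ≤ ∫ x, ‖g x - s x‖ ∂μ := by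
      refine integral_mono (s.integrable_of_isFiniteMeasure.sub hg) hi.norm fun x => ?_
      rw [Real.norm_eq_abs, abs_sub_comm]
      exact le_abs_self _
    rw [integral_sub s.integrable_of_isFiniteMeasure hg] at h1
    linarith
  filter_upwards [simple_step μ σ hσ h s hsnn (ε/3) hε3] with ξ hs
  have hifg : Integrable (fun x : ℝ => Complex.exp (-((ξ:ℂ) * (x:ℂ)) * Complex.I) * (g x : ℂ)) μ :=
    Integrable.bdd_mul hg.ofReal (hexp_aesm μ ξ) (ae_of_all _ fun x => (expBound ξ x).le)
  have hifs : Integrable (fun x : ℝ => Complex.exp (-((ξ:ℂ) * (x:ℂ)) * Complex.I) * (s x : ℂ)) μ :=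
    Integrable.bdd_mul (s.integrable_of_isFiniteMeasure.ofReal) (hexp_aesm μ ξ)
      (ae_of_all _ fun x => (expBound ξ x).le)
  have hbound : ‖(∫ x, Complex.exp (-((ξ:ℂ) * (x:ℂ)) * Complex.I) * (g x : ℂ) ∂μ)
      - ∫ x, Complex.exp (-((ξ:ℂ) * (x:ℂ)) * Complex.I) * (s x : ℂ) ∂μ‖ ≤ ∫ x, ‖g x - s x‖ ∂μ := by
    rw [← integral_sub hifg hifs]
    calc ‖∫ x, (Complex.exp (-((ξ:ℂ) * (x:ℂ)) * Complex.I) * (g x : ℂ)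
            - Complex.exp (-((ξ:ℂ) * (x:ℂ)) * Complex.I) * (s x : ℂ)) ∂μ‖
        ≤ ∫ x, ‖Complex.exp (-((ξ:ℂ) * (x:ℂ)) * Complex.I) * (g x : ℂ)
            - Complex.exp (-((ξ:ℂ) * (x:ℂ)) * Complex.I) * (s x : ℂ)‖ ∂μ :=
          norm_integral_le_integral_norm _
      _ = ∫ x, ‖g x - s x‖ ∂μ := by
          refine integral_congr_ae (Filter.Eventually.of_forall fun x => ?_)
          simp only
          rw [← mul_sub, norm_mul, expBound, one_mul]
          rw [show ((g x : ℂ) - (s x : ℂ)) = ((g x - s x : ℝ) : ℂ) by push_cast; ring,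
            Complex.norm_real]
  have htri : ‖∫ x, Complex.exp (-((ξ:ℂ) * (x:ℂ)) * Complex.I) * (g x : ℂ) ∂μ‖
      ≤ ‖∫ x, Complex.exp (-((ξ:ℂ) * (x:ℂ)) * Complex.I) * (s x : ℂ) ∂μ‖
        + ∫ x, ‖g x - s x‖ ∂μ := by
    have := norm_sub_norm_le (∫ x, Complex.exp (-((ξ:ℂ) * (x:ℂ)) * Complex.I) * (g x : ℂ) ∂μ)
      (∫ x, Complex.exp (-((ξ:ℂ) * (x:ℂ)) * Complex.I) * (s x : ℂ) ∂μ)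
    linarith
  have hmul : (1 - σ) * (∫ x, s x ∂μ) ≤ (1 - σ) * ((∫ x, g x ∂μ) + ε/3) :=
    mul_le_mul_of_nonneg_left hints (by linarith [hσ.2])
  have hσ1 : (1 - σ) * ((∫ x, g x ∂μ) + ε/3) ≤ (1 - σ) * (∫ x, g x ∂μ) + ε/3 := by
    have h0 : (1 - σ) * (ε/3) ≤ ε/3 := by nlinarith [hσ.1, hσ.2]
    nlinarith
  linarith

set_option maxHeartbeats 1000000

/-- If there is `σ ∈ (0,1)` such that for every Borel set `A`,
`limsup_{|ξ|→∞} |(μ|_A)^(ξ)| ≤ (1−σ)·μ(A)`, then every nonzero `v ∈ L²(ℝ, μ, ℂ)` is a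
wandering point of the flow `(Φ_t v)(x) = e^{itx} v(x)`. -/
theorem stmt_6 (μ : Measure ℝ) [IsFiniteMeasure μ] (σ : ℝ) (hσ : σ ∈ Set.Ioo (0 : ℝ) 1)
    (h : ∀ A : Set ℝ, MeasurableSet A →
      Filter.limsup
          (fun ξ : ℝ => ‖∫ x in A, Complex.exp (-(ξ * x) * Complex.I) ∂μ‖)
          (Filter.cocompact ℝ) ≤ (1 - σ) * (μ A).toReal)
    (v : ℝ → ℂ) (hv : MemLp v 2 μ) (hv0 : ¬ v =ᵐ[μ] 0) :
    ∃ a > (0 : ℝ), ∃ T > (0 : ℝ), ∀ t : ℝ, T < |t| →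
      ∀ w : ℝ → ℂ, MemLp w 2 μ →
        eLpNorm (fun x : ℝ => w x - v x) 2 μ < ENNReal.ofReal a →
        eLpNorm (fun x : ℝ => Complex.exp ((↑(t * x)) * Complex.I) * w x - v x) 2 μ
            < ENNReal.ofReal a → False := by
  have hσ0 := hσ.1
  have hσ1 := hσ.2
  set g : ℝ → ℝ := fun x => ‖v x‖ ^ 2 with hg_def
  have hgint : Integrable g μ := hv.norm.integrable_sq
  have hg0 : ∀ x, 0 ≤ g x := fun x => sq_nonneg _
  set c : ℝ := ∫ x, g x ∂μ with hc_def
  have hc0 : 0 < c := by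
    rcases lt_or_eq_of_le (integral_nonneg (show 0 ≤ g from hg0)) with h' | h'
    · exact h'
    · exfalso
      have hz : g =ᵐ[μ] 0 := (integral_eq_zero_iff_of_nonneg hg0 hgint).1 h'.symm
      apply hv0
      filter_upwards [hz] with x hx
      have hvx : ‖v x‖ ^ 2 = 0 := hx
      have : ‖v x‖ = 0 := by
        nlinarith [norm_nonneg (v x)]
      simpa using this
  have hεpos : 0 < σ * c / 2 := by positivity
  have hev := key_step μ σ hσ h g hgint hg0 (σ * c / 2) hεpos
  rw [Filter.hasBasis_cocompact.eventually_iff] at hev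
  obtain ⟨K, hK, hKP⟩ := hev
  obtain ⟨R, hR⟩ := hK.isBounded.subset_closedBall 0
  refine ⟨Real.sqrt (σ * c) / 4, by positivity, |R| + 1, by positivity, ?_⟩
  set a : ℝ := Real.sqrt (σ * c) / 4 with ha_def
  have ha : 0 < a := by positivity
  intro t ht w hw h1 h2
  have htK : t ∉ K := by
    intro hmem
    have := hR hmem
    rw [Metric.mem_closedBall, Real.dist_eq, sub_zero] at this
    have : |t| ≤ |R| := this.trans (le_abs_self R)
    linarith
  have hPt : ‖∫ x, Complex.exp (-((t:ℂ) * (x:ℂ)) * Complex.I) * (g x : ℂ) ∂μ‖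
      ≤ (1 - σ) * c + σ * c / 2 := hKP htK
  -- notation
  set Φv : ℝ → ℂ := fun x => Complex.exp ((↑(t * x) : ℂ) * Complex.I) * v x with hΦv_def
  have hnorm1 : ∀ x : ℝ, ‖Complex.exp ((↑(t * x) : ℂ) * Complex.I)‖ = 1 :=
    fun x => Complex.norm_exp_ofReal_mul_I _
  have hexp_c : Continuous fun x : ℝ => Complex.exp ((↑(t * x) : ℂ) * Complex.I) := by fun_prop
  have hΦv_mem : MemLp Φv 2 μ := by
    refine MemLp.of_le hv (hexp_c.aestronglyMeasurable.mul hv.1)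
      (Filter.Eventually.of_forall fun x => ?_)
    rw [norm_mul, hnorm1, one_mul]
  -- Step 1 : eLpNorm (Φv - v) < ofReal (a + a)
  have e1 : eLpNorm (fun x => Φv x - Complex.exp ((↑(t * x) : ℂ) * Complex.I) * w x) 2 μ
      = eLpNorm (fun x : ℝ => w x - v x) 2 μ := by
    refine eLpNorm_congr_norm_ae (Filter.Eventually.of_forall fun x => ?_)
    rw [hΦv_def]
    simp only
    rw [← mul_sub, norm_mul, hnorm1, one_mul, norm_sub_rev]
  have hdecomp : (fun x => Φv x - v x)
      = (fun x => Φv x - Complex.exp ((↑(t * x) : ℂ) * Complex.I) * w x)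
        + fun x => Complex.exp ((↑(t * x) : ℂ) * Complex.I) * w x - v x := by
    funext x; simp only [Pi.add_apply]; ring
  have haesm1 : AEStronglyMeasurable
      (fun x => Φv x - Complex.exp ((↑(t * x) : ℂ) * Complex.I) * w x) μ :=
    (hexp_c.aestronglyMeasurable.mul hv.1).sub (hexp_c.aestronglyMeasurable.mul hw.1)
  have haesm2 : AEStronglyMeasurable
      (fun x => Complex.exp ((↑(t * x) : ℂ) * Complex.I) * w x - v x) μ :=
    (hexp_c.aestronglyMeasurable.mul hw.1).sub hv.1
  have step1 : eLpNorm (fun x => Φv x - v x) 2 μ < ENNReal.ofReal (a + a) := by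
    calc eLpNorm (fun x => Φv x - v x) 2 μ
        ≤ eLpNorm (fun x => Φv x - Complex.exp ((↑(t * x) : ℂ) * Complex.I) * w x) 2 μ
          + eLpNorm (fun x => Complex.exp ((↑(t * x) : ℂ) * Complex.I) * w x - v x) 2 μ := by
          rw [hdecomp]
          exact eLpNorm_add_le haesm1 haesm2 one_le_two
      _ < ENNReal.ofReal a + ENNReal.ofReal a := by
          rw [e1]
          exact ENNReal.add_lt_add h1 h2
      _ = ENNReal.ofReal (a + a) := (ENNReal.ofReal_add ha.le ha.le).symm
  -- Step 2 : lower bound on the L² norm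
  have hmemsub : MemLp (fun x => Φv x - v x) 2 μ := hΦv_mem.sub hv
  have hcos_sq : ∀ θ : ℝ, ‖Complex.exp ((θ:ℂ) * Complex.I) - 1‖ ^ (2:ℕ)
      = 2 - 2 * Real.cos θ := by
    intro θ
    rw [Complex.sq_norm, Complex.normSq_apply]
    simp only [Complex.sub_re, Complex.sub_im, Complex.exp_ofReal_mul_I_re,
      Complex.exp_ofReal_mul_I_im, Complex.one_re, Complex.one_im]
    nlinarith [Real.sin_sq_add_cos_sq θ]
  have hpt : ∀ x : ℝ, ‖Φv x - v x‖ ^ (2:ℝ) = (2 - 2 * Real.cos (t * x)) * g x := by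
    intro x
    rw [show (2:ℝ) = ((2:ℕ):ℝ) by norm_num, Real.rpow_natCast]
    have h1' : Φv x - v x = (Complex.exp ((↑(t * x) : ℂ) * Complex.I) - 1) * v x := by
      rw [hΦv_def]; ring
    rw [h1', norm_mul, mul_pow, hcos_sq (t * x)]
    simp only [hg_def]
    push_cast
    ring
  have hcosint : Integrable (fun x => Real.cos (t * x) * g x) μ :=
    Integrable.bdd_mul hgint
      ((Real.continuous_cos.comp (continuous_const.mul continuous_id)).aestronglyMeasurable)
      (c := 1) (ae_of_all _ fun x => by rw [Real.norm_eq_abs]; exact Real.abs_cos_le_one _)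
  have hI2eq : ∫ x, ‖Φv x - v x‖ ^ (2:ℝ) ∂μ
      = 2 * c - 2 * ∫ x, Real.cos (t * x) * g x ∂μ := by
    rw [show (fun x => ‖Φv x - v x‖ ^ (2:ℝ))
        = fun x => 2 * g x - 2 * (Real.cos (t * x) * g x) from funext fun x => by
          rw [hpt x]; ring]
    rw [integral_sub (hgint.const_mul 2) (hcosint.const_mul 2),
      integral_const_mul, integral_const_mul]
  have hre : ∫ x, Real.cos (t * x) * g x ∂μ
      ≤ ‖∫ x, Complex.exp (-((t:ℂ) * (x:ℂ)) * Complex.I) * (g x : ℂ) ∂μ‖ := by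
    have hint : Integrable (fun x : ℝ => Complex.exp (-((t:ℂ) * (x:ℂ)) * Complex.I) * (g x : ℂ)) μ :=
      Integrable.bdd_mul hgint.ofReal (hexp_aesm μ t) (ae_of_all _ fun x => (expBound t x).le)
    have heq : ∫ x, Real.cos (t * x) * g x ∂μ
        = (∫ x, Complex.exp (-((t:ℂ) * (x:ℂ)) * Complex.I) * (g x : ℂ) ∂μ).re := by
      refine Eq.trans ?_ (integral_re hint)
      refine integral_congr_ae (Filter.Eventually.of_forall fun x => ?_)
      simp only
      show Real.cos (t * x) * g x
        = (Complex.exp (-((t:ℂ) * (x:ℂ)) * Complex.I) * ((g x : ℝ) : ℂ)).re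
      rw [Complex.mul_re]
      have harg : (-((t:ℂ) * (x:ℂ)) * Complex.I) = ((-(t * x) : ℝ) : ℂ) * Complex.I := by
        push_cast; ring
      rw [harg, Complex.exp_ofReal_mul_I_re, Complex.exp_ofReal_mul_I_im]
      simp [Real.cos_neg]
    rw [heq]
    exact Complex.re_le_norm _
  have hI2 : σ * c ≤ ∫ x, ‖Φv x - v x‖ ^ (2:ℝ) ∂μ := by
    rw [hI2eq]
    nlinarith [hre, hPt]
  -- Step 3 : combine
  have heval := MemLp.eLpNorm_eq_integral_rpow_norm (p := 2) (by norm_num) (by norm_num) hmemsub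
  simp only [ENNReal.toReal_ofNat] at heval
  rw [heval] at step1
  have hlt : (∫ x, ‖Φv x - v x‖ ^ (2:ℝ) ∂μ) ^ ((2:ℝ))⁻¹ < a + a :=
    (ENNReal.ofReal_lt_ofReal_iff (by positivity)).1 step1
  have hsqrt : Real.sqrt (σ * c) ≤ (∫ x, ‖Φv x - v x‖ ^ (2:ℝ) ∂μ) ^ ((2:ℝ))⁻¹ := by
    rw [show (∫ x, ‖Φv x - v x‖ ^ (2:ℝ) ∂μ) ^ ((2:ℝ))⁻¹
        = Real.sqrt (∫ x, ‖Φv x - v x‖ ^ (2:ℝ) ∂μ) by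
          rw [Real.sqrt_eq_rpow]; norm_num]
    exact Real.sqrt_le_sqrt hI2
  have hsc : 0 < Real.sqrt (σ * c) := Real.sqrt_pos.2 (by positivity)
  rw [ha_def] at hlt
  linarith
end

section
/- Let μ be an absolutely continuous measure on ℝ with density ρ ∈ L¹_loc(ℝ), let λ: ℝ → ℝ be strictly monotone and continuously differentiable on an interval Δ ⊆ ℝ, and let r ∈ L²(ℝ, μ, [0,∞)) satisfy ∫_Δ r(x)² ρ(x) dx > 0. Then no point of the torus 𝕋_r = {u ∈ L²(ℝ, μ, ℂ) : |u| = r μ-a.e.} is periodic for the flow (Φ_t u)(x) = e^{itλ(x)} u(x): there is no u ∈ 𝕋_r and T > 0 with Φ_T u = u. -/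
open MeasureTheory

/-- Let `μ = ρ dx` with `ρ ∈ L¹_loc`, `λ` strictly monotone and `C¹` on an interval `Δ`,
and `r ∈ L²(μ)` nonnegative with `∫_Δ r² ρ dx > 0`. Then no point of the torus
`𝕋_r = {u ∈ L²(μ) : |u| = r a.e.}` is periodic for the flow `(Φ_t u)(x) = e^{itλ(x)}u(x)`. -/
theorem stmt_14 (ρ : ℝ → ℝ) (hρ0 : ∀ x, 0 ≤ ρ x)
    (hρ : MeasureTheory.LocallyIntegrable ρ volume)
    (μ : Measure ℝ) (hμ : μ = volume.withDensity fun x => ENNReal.ofReal (ρ x))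
    (lam : ℝ → ℝ) (a b : ℝ) (hab : a < b)
    (hmono : StrictMonoOn lam (Set.Ioo a b) ∨ StrictAntiOn lam (Set.Ioo a b))
    (hC1 : ContDiffOn ℝ 1 lam (Set.Ioo a b))
    (r : ℝ → ℝ) (hr0 : ∀ x, 0 ≤ r x)
    (hrL2 : MemLp (fun x => (r x : ℂ)) 2 μ)
    (hΔ : 0 < ∫ x in Set.Ioo a b, r x ^ 2 * ρ x) :
    ¬ ∃ u : ℝ → ℂ, MemLp u 2 μ ∧ (∀ᵐ x ∂μ, ‖u x‖ = r x) ∧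
        ∃ T : ℝ, 0 < T ∧
          (fun x : ℝ => Complex.exp ((↑(T * lam x)) * Complex.I) * u x) =ᵐ[μ] u := by
  rintro ⟨u, huL2, hnorm, T, hT, heq⟩
  -- measurable modification of ρ
  have hρae : AEMeasurable ρ volume := hρ.aestronglyMeasurable.aemeasurable
  set ρ' := hρae.mk ρ with hρ'def
  have hρ'meas : Measurable ρ' := hρae.measurable_mk
  have hρρ' : ρ =ᵐ[volume] ρ' := hρae.ae_eq_mk
  have hμ' : μ = volume.withDensity fun x => ENNReal.ofReal (ρ' x) := by
    rw [hμ]; exact withDensity_congr_ae (hρρ'.mono fun x hx => by simp only [hx])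
  -- the set where `T * lam` hits `2πℤ` is countable, hence null
  set C : Set ℝ := {x | x ∈ Set.Ioo a b ∧ ∃ n : ℤ, T * lam x = n * (2 * Real.pi)} with hC
  have hinj : Set.InjOn lam (Set.Ioo a b) := by
    rcases hmono with h | h
    · exact h.injOn
    · exact h.injOn
  have hCc : C.Countable := by
    have hsub : C ⊆ ⋃ n : ℤ, {x | x ∈ Set.Ioo a b ∧ lam x = n * (2 * Real.pi) / T} := by
      rintro x ⟨hx, n, hn⟩
      refine Set.mem_iUnion.2 ⟨n, hx, ?_⟩
      field_simp
      linarith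
    refine Set.Countable.mono hsub (Set.countable_iUnion fun n => ?_)
    refine Set.Subsingleton.countable ?_
    rintro x ⟨hx, hx2⟩ y ⟨hy, hy2⟩
    exact hinj hx hy (hx2.trans hy2.symm)
  have hCnull : μ C = 0 := by
    rw [hμ]
    exact withDensity_absolutelyContinuous _ _ (hCc.measure_zero volume)
  -- a.e. with respect to μ, r vanishes on (a,b)
  have key : ∀ᵐ x ∂μ, x ∈ Set.Ioo a b → r x = 0 := by
    have hCa : ∀ᵐ x ∂μ, x ∉ C := (measure_eq_zero_iff_ae_notMem).1 hCnull
    filter_upwards [heq, hnorm, hCa] with x hx hn hc hxab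
    by_contra hr
    have hu : u x ≠ 0 := by
      intro h0; rw [h0, norm_zero] at hn; exact hr hn.symm
    have hexp : Complex.exp ((T * lam x : ℝ) * Complex.I) = 1 :=
      mul_right_cancel₀ hu (by rw [one_mul]; exact hx)
    rw [Complex.exp_eq_one_iff] at hexp
    obtain ⟨n, hn2⟩ := hexp
    apply hc
    refine ⟨hxab, n, ?_⟩
    have h3 : (↑(T * lam x) : ℂ) = (n : ℂ) * (2 * Real.pi) := by
      have h4 : (↑(T * lam x) : ℂ) * Complex.I = ((n : ℂ) * (2 * Real.pi)) * Complex.I := by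
        rw [hn2]; push_cast; ring
      exact mul_right_cancel₀ Complex.I_ne_zero h4
    exact_mod_cast h3
  -- transfer to the volume measure
  have key2 : ∀ᵐ x ∂volume, x ∈ Set.Ioo a b → r x ^ 2 * ρ x = 0 := by
    rw [hμ'] at key
    rw [ae_withDensity_iff (hρ'meas.ennreal_ofReal)] at key
    filter_upwards [key, hρρ'] with x hx heqρ hxab
    by_cases h0 : ENNReal.ofReal (ρ' x) = 0
    · have hle : ρ x ≤ 0 := by
        rw [heqρ]; exact ENNReal.ofReal_eq_zero.1 h0
      have : ρ x = 0 := le_antisymm hle (hρ0 x)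
      rw [this, mul_zero]
    · rw [hx h0 hxab]
      norm_num
  have hzero : ∫ x in Set.Ioo a b, r x ^ 2 * ρ x = 0 := by
    refine integral_eq_zero_of_ae ?_
    rw [Filter.EventuallyEq, ae_restrict_iff' measurableSet_Ioo]
    filter_upwards [key2] with x hx hxab
    simpa using hx hxab
  linarith
end

section
/- Let μ be a finite absolutely continuous measure on ℝ with density ρ ∈ L¹(ℝ). Then for every nonzero u ∈ L²(ℝ, μ, ℂ), the trajectory {Φ_t u : t ∈ ℝ} of the flow (Φ_t u)(x) = e^{itx} u(x) is not dense in the torus 𝕋_{|u|} = {v ∈ L²(ℝ, μ, ℂ) : |v| = |u| μ-a.e.}. -/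
open MeasureTheory Filter Topology

lemma aux_cos_countable (s : ℝ) : Set.Countable {x : ℝ | Real.cos (s * x) = -1} := by
  rcases eq_or_ne s 0 with rfl | hs
  · convert Set.countable_empty
    ext x
    simp only [Set.mem_setOf_eq, zero_mul, Real.cos_zero, Set.mem_empty_iff_false, iff_false]
    norm_num
  · refine (Set.countable_range fun k : ℤ => (Real.pi + k * (2 * Real.pi)) / s).mono ?_
    intro x hx
    obtain ⟨k, hk⟩ := Real.cos_eq_neg_one_iff.mp hx
    refine ⟨k, ?_⟩
    dsimp only
    rw [hk, mul_div_cancel_left₀ _ hs]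

set_option maxHeartbeats 1000000 in
/-- Let `μ = ρ dx` be a finite absolutely continuous measure with density `ρ ∈ L¹(ℝ)`.
Then for every nonzero `u ∈ L²(ℝ, μ, ℂ)`, the trajectory `{Φ_t u : t ∈ ℝ}` of the flow
`(Φ_t u)(x) = e^{itx}u(x)` is not dense in the torus `𝕋_{|u|} = {v : |v| = |u| a.e.}`. -/
theorem stmt_15 (ρ : ℝ → ℝ) (hρ0 : ∀ x, 0 ≤ ρ x) (hρ : Integrable ρ volume)
    (μ : Measure ℝ) (hμ : μ = volume.withDensity fun x => ENNReal.ofReal (ρ x))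
    (u : Lp ℂ 2 μ) (hu : u ≠ 0) :
    ¬ ({v : Lp ℂ 2 μ | ∀ᵐ x ∂μ, ‖v x‖ = ‖u x‖} ⊆
        closure {w : Lp ℂ 2 μ |
          ∃ t : ℝ, ⇑w =ᵐ[μ] fun x : ℝ => Complex.exp ((↑(t * x)) * Complex.I) * u x}) := by
  intro hsub
  have hρm : AEMeasurable (fun x => Real.toNNReal (ρ x)) volume :=
    measurable_real_toNNReal.comp_aemeasurable hρ.aemeasurable
  have hμd : μ = volume.withDensity fun x => ((Real.toNNReal (ρ x) : NNReal) : ENNReal) := hμ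
  have hac : μ ≪ volume := hμ ▸ withDensity_absolutelyContinuous _ _
  -- `-u` lies in the torus
  have hmem : (-u) ∈ {v : Lp ℂ 2 μ | ∀ᵐ x ∂μ, ‖v x‖ = ‖u x‖} := by
    filter_upwards [Lp.coeFn_neg u] with x hx
    rw [hx]
    simp [Pi.neg_apply]
  obtain ⟨w, hw, hwlim⟩ := mem_closure_iff_seq_limit.mp (hsub hmem)
  choose t ht using hw
  -- continuity and norm facts about the exponential factor
  have hexpc : ∀ s : ℝ, Continuous fun x : ℝ => Complex.exp ((s * x : ℝ) * Complex.I) := by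
    intro s; fun_prop
  have hexpc' : ∀ x : ℝ, Continuous fun s : ℝ => Complex.exp ((s * x : ℝ) * Complex.I) := by
    intro x; fun_prop
  have hexpn : ∀ y : ℝ, ‖Complex.exp ((y : ℝ) * Complex.I)‖ = 1 := fun y => by
    rw [Complex.norm_exp_ofReal_mul_I]
  -- integrability of `‖u x‖ ^ 2` with respect to μ
  have husq : Integrable (fun x => (‖u x‖ ^ 2 : ℝ)) μ := by
    have h := (Lp.memLp u).integrable_norm_rpow (by norm_num) (by norm_num)
    simpa [ENNReal.toReal_ofNat, Real.rpow_natCast] using h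
  have husqC : Integrable (fun x => ((‖u x‖ ^ 2 : ℝ) : ℂ)) μ := husq.ofReal
  -- the correlation function
  set F : ℝ → ℂ :=
    fun s => ∫ x, Complex.exp ((s * x : ℝ) * Complex.I) * ((‖u x‖ ^ 2 : ℝ) : ℂ) ∂μ with hF
  have hFint : ∀ s, Integrable
      (fun x => Complex.exp ((s * x : ℝ) * Complex.I) * ((‖u x‖ ^ 2 : ℝ) : ℂ)) μ := by
    intro s
    exact husqC.bdd_mul (hexpc s).aestronglyMeasurable (c := 1) (Eventually.of_forall fun x => le_of_eq (hexpn _))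
  have hconj : ∀ z : ℂ, (starRingEnd ℂ) z * z = ((‖z‖ ^ 2 : ℝ) : ℂ) := by
    intro z
    rw [← Complex.normSq_eq_conj_mul_self]
    simp [← Complex.ofReal_pow, Complex.sq_norm]
  -- F (t n) is the inner product ⟪u, w n⟫
  have hFt : ∀ n, F (t n) = (inner ℂ u (w n) : ℂ) := by
    intro n
    rw [L2.inner_def]
    refine integral_congr_ae ?_
    filter_upwards [ht n] with x hx
    rw [RCLike.inner_apply', hx]
    rw [show (starRingEnd ℂ) (u x) * (Complex.exp ((t n * x : ℝ) * Complex.I) * u x)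
        = Complex.exp ((t n * x : ℝ) * Complex.I) * ((starRingEnd ℂ) (u x) * u x) by ring,
      hconj]
  -- convergence of F (t n) to -‖u‖²
  have hconv : Tendsto (fun n => F (t n)) atTop (𝓝 (-((‖u‖ : ℂ) ^ 2))) := by
    have h1 : Tendsto (fun n => (inner ℂ u (w n) : ℂ)) atTop (𝓝 (inner ℂ u (-u))) :=
      (tendsto_const_nhds : Tendsto (fun _ : ℕ => u) atTop (𝓝 u)).inner hwlim
    rw [inner_neg_right, inner_self_eq_norm_sq_to_K] at h1
    simp only [hFt]; exact h1
  -- the density function on the real line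
  set g : ℝ → ℂ := fun x => ((ρ x : ℝ) : ℂ) * ((‖u x‖ ^ 2 : ℝ) : ℂ) with hg
  have hsmul : ∀ (x : ℝ) (z : ℂ), (Real.toNNReal (ρ x)) • z = ((ρ x : ℝ) : ℂ) * z := by
    intro x z
    rw [NNReal.smul_def, Real.coe_toNNReal _ (hρ0 x), Complex.real_smul]
  -- F as an integral over Lebesgue measure
  have hFG : ∀ s, F s = ∫ x, Complex.exp ((s * x : ℝ) * Complex.I) * g x ∂volume := by
    intro s
    have h1 := integral_withDensity_eq_integral_smul₀ hρm
      (fun x => Complex.exp ((s * x : ℝ) * Complex.I) * ((‖u x‖ ^ 2 : ℝ) : ℂ))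
    rw [← hμd] at h1
    rw [hF]
    dsimp only
    rw [h1]
    refine integral_congr_ae (Eventually.of_forall fun x => ?_)
    dsimp only
    rw [hsmul, hg]
    ring
  -- integrability of g
  have hgint : Integrable g volume := by
    have h0 : Integrable (fun x => ((‖u x‖ ^ 2 : ℝ) : ℂ))
        (volume.withDensity fun x => ((Real.toNNReal (ρ x) : NNReal) : ENNReal)) := by
      rw [← hμd]; exact husqC
    have h1 : Integrable (fun x => (Real.toNNReal (ρ x)) • ((‖u x‖ ^ 2 : ℝ) : ℂ)) volume :=
      (integrable_withDensity_iff_integrable_smul₀ hρm).mp h0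
    refine h1.congr (Eventually.of_forall fun x => ?_)
    dsimp only
    rw [hsmul]
  -- continuity of F
  have hFcont : Continuous F := by
    have : Continuous fun s => ∫ x, Complex.exp ((s * x : ℝ) * Complex.I) * g x ∂volume := by
      refine continuous_of_dominated
        (fun s => ((hexpc s).aestronglyMeasurable.mul hgint.1))
        (fun s => Eventually.of_forall fun x => ?_) hgint.norm
        (Eventually.of_forall fun x => (hexpc' x).mul continuous_const)
      rw [norm_mul, hexpn, one_mul]
    refine this.congr fun s => (hFG s).symm
  -- Riemann-Lebesgue: F tends to 0 at infinity
  have hRL : Tendsto F (cocompact ℝ) (𝓝 0) := by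
    have hc : ((-(2 * Real.pi))⁻¹ : ℝ) ≠ 0 := by
      simp [Real.pi_ne_zero]
    have hφ : Tendsto (fun s : ℝ => s * (-(2 * Real.pi))⁻¹) (cocompact ℝ) (cocompact ℝ) :=
      le_of_eq (Homeomorph.mulRight₀ _ hc).map_cocompact
    have h0 := (Real.tendsto_integral_exp_smul_cocompact g).comp hφ
    refine h0.congr fun s => ?_
    rw [hFG s]
    refine integral_congr_ae (Eventually.of_forall fun x => ?_)
    dsimp only [Function.comp]
    rw [Circle.smul_def, Real.fourierChar_apply]
    congr 2
    have hπ : (Real.pi : ℂ) ≠ 0 := Complex.ofReal_ne_zero.mpr Real.pi_ne_zero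
    push_cast
    field_simp
  -- norms
  have hupos : (0 : ℝ) < ‖u‖ ^ 2 := by
    have : (0 : ℝ) < ‖u‖ := norm_pos_iff.mpr hu
    positivity
  have hnormlim : Tendsto (fun n => ‖F (t n)‖) atTop (𝓝 (‖u‖ ^ 2)) := by
    have h := hconv.norm
    simpa using h
  -- t n eventually lies in a compact set
  have hev1 : ∀ᶠ n in atTop, ‖u‖ ^ 2 / 2 < ‖F (t n)‖ :=
    hnormlim.eventually (eventually_gt_nhds (by linarith))
  have hco : {s : ℝ | ‖F s‖ < ‖u‖ ^ 2 / 2} ∈ cocompact ℝ := by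
    have := (NormedAddCommGroup.tendsto_nhds_zero.mp hRL) (‖u‖ ^ 2 / 2) (by linarith)
    exact this
  obtain ⟨K, hK, hKsub⟩ := mem_cocompact.mp hco
  have hevK : ∀ᶠ n in atTop, t n ∈ K := by
    filter_upwards [hev1] with n hn
    by_contra h
    exact absurd (hKsub h) (not_lt.mpr hn.le)
  obtain ⟨N, hN⟩ := eventually_atTop.mp hevK
  set y : ℕ → ℝ := fun n => t (n + N) with hy
  have hyK : ∀ n, y n ∈ K := fun n => hN _ (Nat.le_add_left N n)
  obtain ⟨s₀, _, φ, hφmono, hφlim⟩ := hK.tendsto_subseq hyK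
  -- F s₀ = -‖u‖²
  have h2 : Tendsto (fun n => F (y (φ n))) atTop (𝓝 (F s₀)) :=
    (hFcont.tendsto s₀).comp hφlim
  have h3 : Tendsto (fun n => F (y (φ n))) atTop (𝓝 (-((‖u‖ : ℂ) ^ 2))) :=
    hconv.comp (tendsto_atTop_mono (fun n => Nat.le_add_right _ _) hφmono.tendsto_atTop)
  have hFs₀ : F s₀ = -((‖u‖ : ℂ) ^ 2) := tendsto_nhds_unique h2 h3
  -- extract real parts
  have hre : ∫ x, Real.cos (s₀ * x) * ‖u x‖ ^ 2 ∂μ = -(‖u‖ ^ 2) := by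
    have h := integral_re (hFint s₀)
    rw [show RCLike.re (∫ x, Complex.exp ((s₀ * x : ℝ) * Complex.I) * ((‖u x‖ ^ 2 : ℝ) : ℂ) ∂μ)
        = RCLike.re (-((‖u‖ : ℂ) ^ 2)) from congrArg _ hFs₀] at h
    have heq : ∀ x : ℝ, RCLike.re (Complex.exp ((s₀ * x : ℝ) * Complex.I) * ((‖u x‖ ^ 2 : ℝ) : ℂ))
        = Real.cos (s₀ * x) * ‖u x‖ ^ 2 := by
      intro x
      rw [mul_comm, RCLike.re_to_complex, Complex.re_ofReal_mul, Complex.exp_ofReal_mul_I_re]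
      ring
    rw [show (∫ x, RCLike.re (Complex.exp ((s₀ * x : ℝ) * Complex.I) * ((‖u x‖ ^ 2 : ℝ) : ℂ)) ∂μ)
        = ∫ x, Real.cos (s₀ * x) * ‖u x‖ ^ 2 ∂μ from integral_congr_ae
        (Eventually.of_forall fun x => heq x)] at h
    rw [h]
    simp [RCLike.re_to_complex, ← Complex.ofReal_pow]
  have hnormsq : ∫ x, (‖u x‖ ^ 2 : ℝ) ∂μ = ‖u‖ ^ 2 := by
    have h1 : (inner ℂ u u : ℂ) = ∫ x, ((‖u x‖ ^ 2 : ℝ) : ℂ) ∂μ := by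
      rw [L2.inner_def]
      refine integral_congr_ae (Eventually.of_forall fun x => ?_)
      dsimp only
      rw [RCLike.inner_apply', hconj]
    rw [inner_self_eq_norm_sq_to_K] at h1
    have h2 := congrArg (fun z : ℂ => RCLike.re z) h1
    rw [← integral_re husqC] at h2
    simpa [RCLike.re_to_complex, ← Complex.ofReal_pow] using h2.symm
  have hcosint : Integrable (fun x => Real.cos (s₀ * x) * ‖u x‖ ^ 2) μ :=
    husq.bdd_mul ((Real.continuous_cos.comp (continuous_const.mul
      continuous_id)).aestronglyMeasurable) (c := 1) (Eventually.of_forall fun x => by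
        rw [Real.norm_eq_abs]; exact Real.abs_cos_le_one _)
  have hfun : (fun x => (1 + Real.cos (s₀ * x)) * ‖u x‖ ^ 2)
      = fun x => ‖u x‖ ^ 2 + Real.cos (s₀ * x) * ‖u x‖ ^ 2 := by
    funext x; ring
  have hkey : ∫ x, (1 + Real.cos (s₀ * x)) * ‖u x‖ ^ 2 ∂μ = 0 := by
    rw [hfun, integral_add husq hcosint, hnormsq, hre]
    ring
  have hae : (fun x => (1 + Real.cos (s₀ * x)) * ‖u x‖ ^ 2) =ᵐ[μ] 0 := by
    refine (integral_eq_zero_iff_of_nonneg_ae ?_ ?_).mp hkey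
    · refine Eventually.of_forall fun x => ?_
      have := Real.neg_one_le_cos (s₀ * x)
      have h1 : (0 : ℝ) ≤ 1 + Real.cos (s₀ * x) := by linarith
      positivity
    · rw [hfun]; exact husq.add hcosint
  -- the bad set has measure zero
  have hS : μ {x : ℝ | Real.cos (s₀ * x) = -1} = 0 :=
    hac ((aux_cos_countable s₀).measure_zero volume)
  have hzero : ⇑u =ᵐ[μ] 0 := by
    have hS' : ∀ᵐ x ∂μ, x ∉ {x : ℝ | Real.cos (s₀ * x) = -1} :=
      measure_eq_zero_iff_ae_notMem.mp hS
    filter_upwards [hae, hS'] with x h1 h2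
    have h3 : (1 + Real.cos (s₀ * x)) * ‖u x‖ ^ 2 = 0 := h1
    rcases mul_eq_zero.mp h3 with h | h
    · exact absurd (by linarith : Real.cos (s₀ * x) = -1) h2
    · have : ‖u x‖ = 0 := by
        have := pow_eq_zero_iff (n := 2) (by norm_num) |>.mp h
        exact this
      simpa using norm_eq_zero.mp this
  exact hu (Lp.eq_zero_iff_ae_eq_zero.mpr hzero)
end
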